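/- Let I ⊆ S be a support-2 monomial ideal and suppose {x_i, x_j} is an edge of G(I) such that every minimal vertex cover of G(I) contains exactly one of x_i, x_j. If some minimal generator u of I is divisible by x_i^{ν_{i,j}+1} or by x_j^{ν_{j,i}+1}, where ν_{i,j} (resp. ν_{j,i}) is the minimum exponent of x_i (resp. x_j) among generators supported on {x_i,x_j}, then I^{(1)} ≠ I, i.e., I has an embedded associated prime. -/

import Mathlib

set_option synthInstance.maxHeartbeats 1000000
set_option maxHeartbeats 1000000

open MvPolynomial

section Defs

variable {K : Type*} [Field K] {σ : Type*}

/-- `I` is a monomial ideal. -/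
def IsMonomialIdeal (I : Ideal (MvPolynomial σ K)) : Prop :=
  ∃ A : Set (σ →₀ ℕ), I = Ideal.span ((fun a => (monomial a (1 : K) : MvPolynomial σ K)) '' A)

/-- Exponent vectors of the minimal monomial generators of `I`. -/
def minGens (I : Ideal (MvPolynomial σ K)) : Set (σ →₀ ℕ) :=
  {a | (monomial a (1 : K) : MvPolynomial σ K) ∈ I ∧
    ∀ b : σ →₀ ℕ, (monomial b (1 : K) : MvPolynomial σ K) ∈ I → b ≤ a → b = a}

/-- A support-2 monomial ideal: every minimal monomial generator is supported
on exactly two variables. -/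
def IsSupportTwo (I : Ideal (MvPolynomial σ K)) : Prop :=
  ∀ a ∈ minGens I, a.support.card = 2

variable [DecidableEq σ]

/-- Minimal monomial generators of `I` supported on `{i, j}`. -/
def supportedOn (I : Ideal (MvPolynomial σ K)) (i j : σ) : Set (σ →₀ ℕ) :=
  {a | a ∈ minGens I ∧ a.support = {i, j}}

/-- `ν_{i,j}`: the minimum exponent of `x_i` among the minimal generators of `I`
supported on `{i, j}`. -/
noncomputable def nuExp (I : Ideal (MvPolynomial σ K)) (i j : σ) : ℕ :=
  sInf ((fun a => a i) '' supportedOn I i j)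

/-- `μ_{i,j}`: the maximum exponent of `x_i` among the minimal generators of `I`
supported on `{i, j}`. -/
noncomputable def muExp (I : Ideal (MvPolynomial σ K)) (i j : σ) : ℕ :=
  sSup ((fun a => a i) '' supportedOn I i j)

/-- The underlying simple graph `G(I)` of a support-2 monomial ideal. -/
def underGraph (I : Ideal (MvPolynomial σ K)) : SimpleGraph σ where
  Adj i j := i ≠ j ∧ (supportedOn I i j).Nonempty
  symm := by
    constructor
    rintro i j ⟨hij, a, hmin, hs⟩
    exact ⟨hij.symm, a, hmin, by rw [hs, Finset.pair_comm]⟩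
  loopless := ⟨fun i h => h.1 rfl⟩

end Defs

section Symbolic

variable {R : Type*} [CommRing R]

/-- The component of `I` at a prime `P`, namely `I S_P ∩ S`. -/
noncomputable def localizedComponent (I P : Ideal R) (hP : P.IsPrime) : Ideal R :=
  letI := hP
  (I.map (algebraMap R (Localization.AtPrime P))).comap
    (algebraMap R (Localization.AtPrime P))

/-- The `s`-th symbolic power `I^{(s)} = ⋂_{P ∈ MinAss(I)} (I^s S_P ∩ S)`. -/
noncomputable def symbolicPower (I : Ideal R) (s : ℕ) : Ideal R :=
  ⨅ P : I.minimalPrimes, localizedComponent (I ^ s) P.1 P.2.1.1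

/-- A Simis ideal: `I^{(s)} = I^s` for all `s ≥ 1`. -/
def IsSimis (I : Ideal R) : Prop := ∀ s : ℕ, 1 ≤ s → symbolicPower I s = I ^ s

/-- `I` has no embedded associated primes. -/
def NoEmbeddedPrimes (I : Ideal R) : Prop :=
  ∀ P ∈ associatedPrimes R (R ⧸ I), P ∈ I.minimalPrimes

end Symbolic

section Decomp

variable {K : Type*} [Field K] {σ : Type*}

/-- An irreducible monomial ideal: generated by pure powers of variables. -/
def IsIrredMonomialIdeal (Q : Ideal (MvPolynomial σ K)) : Prop :=
  ∃ (t : Finset σ) (e : σ → ℕ), (∀ i ∈ t, 1 ≤ e i) ∧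
    Q = Ideal.span ((fun i => (X i : MvPolynomial σ K) ^ e i) '' t)

/-- `I` has a minimal (irredundant, distinct radicals) irreducible decomposition. -/
def HasMinimalIrredDecomp (I : Ideal (MvPolynomial σ K)) : Prop :=
  ∃ (r : ℕ) (Q : Fin r → Ideal (MvPolynomial σ K)),
    (∀ k, IsIrredMonomialIdeal (Q k)) ∧ I = ⨅ k, Q k ∧
    (∀ k, (⨅ l ∈ ({k}ᶜ : Set (Fin r)), Q l) ≠ I) ∧
    (∀ k l, k ≠ l → (Q k).radical ≠ (Q l).radical)

/-- The ideal obtained from `J` by the standard linear weighting `x_i ↦ x_i^{d_i}`. -/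
noncomputable def weightedIdeal (d : σ → ℕ) (J : Ideal (MvPolynomial σ K)) : Ideal (MvPolynomial σ K) :=
  Ideal.span {m | ∃ a ∈ minGens J, ∃ b : σ →₀ ℕ,
    (∀ i, b i = d i * a i) ∧ m = (monomial b (1 : K) : MvPolynomial σ K)}

/-- `I` has a standard linear weighting: there are `d_i ≥ 1` such that every
minimal generator supported on `{i,j}` is `x_i^{d_i} x_j^{d_j}`. -/
def HasStdWeighting (I : Ideal (MvPolynomial σ K)) : Prop :=
  ∃ d : σ → ℕ, (∀ i, 1 ≤ d i) ∧ ∀ a ∈ minGens I, ∀ i ∈ a.support, a i = d i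

variable (K) in
/-- The edge ideal of a simple graph. -/
noncomputable def edgeIdeal (G : SimpleGraph σ) : Ideal (MvPolynomial σ K) :=
  Ideal.span {m | ∃ i j, G.Adj i j ∧ m = (X i * X j : MvPolynomial σ K)}

end Decomp

section Graph

variable {σ : Type*}

/-- A vertex cover of a simple graph. -/
def IsVertexCover (G : SimpleGraph σ) (C : Set σ) : Prop :=
  ∀ ⦃i j⦄, G.Adj i j → i ∈ C ∨ j ∈ C

/-- A minimal vertex cover of a simple graph. -/
def IsMinimalVertexCover (G : SimpleGraph σ) (C : Set σ) : Prop :=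
  IsVertexCover G C ∧ ∀ D ⊆ C, IsVertexCover G D → D = C

end Graph

section CM

variable {K : Type*} [Field K] {σ : Type*}

/-- The depth of `S/I` with respect to the irrelevant maximal ideal
`⟨x_1, …, x_n⟩`: the supremum of lengths of regular sequences on `S/I`
consisting of elements of that ideal. -/
noncomputable def quotDepth (I : Ideal (MvPolynomial σ K)) : ℕ∞ :=
  sSup {n : ℕ∞ | ∃ rs : List (MvPolynomial σ K), (rs.length : ℕ∞) = n ∧
    (∀ r ∈ rs, r ∈ Ideal.span (Set.range (X : σ → MvPolynomial σ K))) ∧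
    RingTheory.Sequence.IsRegular (MvPolynomial σ K ⧸ I)
      (rs.map (Ideal.Quotient.mk I))}

/-- `S/I` is Cohen–Macaulay: depth equals Krull dimension. -/
def IsCohenMacaulayQuot (I : Ideal (MvPolynomial σ K)) : Prop :=
  (quotDepth I : WithBot ℕ∞) = ringKrullDim (MvPolynomial σ K ⧸ I)

/-- The height of a prime ideal, as the Krull dimension of the localization. -/
noncomputable def primeHeight' {R : Type*} [CommRing R] (P : Ideal R) (hP : P.IsPrime) :
    WithBot ℕ∞ :=
  letI := hP
  ringKrullDim (Localization.AtPrime P)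

/-- `I` is unmixed: all associated primes of `S/I` have the same height. -/
def IsUnmixed {R : Type*} [CommRing R] (I : Ideal R) : Prop :=
  ∀ P, ∀ hP : P ∈ associatedPrimes R (R ⧸ I), ∀ Q, ∀ hQ : Q ∈ associatedPrimes R (R ⧸ I),
    primeHeight' P hP.1 = primeHeight' Q hQ.1

end CM

/-!
Let `ν = ν_{i,j}`, attained by a generator `a = x_i^ν x_j^{a_j}`, and let `m` be `u` with its
`x_i`-exponent lowered to `ν`. No minimal generator divides `m`: it would divide `u`, hence be `u`.
On the other hand the variables lying in a minimal prime `P` of `I` form a minimal vertex cover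
of `G(I)`, so `x_i ∉ P` or `x_j ∉ P`. In the first case `x_i^{u_i} m` is a multiple of `u`, in the
second `x_j^{a_j} m` is a multiple of `a`; either way `m` lies in the `P`-primary component of
`I`, so `m ∈ I^{(1)} \ I`.
-/

namespace MvPolynomial

variable {R σ : Type*}

section CommSemiring

variable [CommSemiring R]

theorem monomial_mem_of_le {I : Ideal (MvPolynomial σ R)} {a b : σ →₀ ℕ} (hab : a ≤ b)
    (ha : monomial a (1 : R) ∈ I) : monomial b (1 : R) ∈ I :=
  Ideal.mem_of_dvd _ (monomial_dvd_monomial.mpr ⟨Or.inr hab, one_dvd _⟩) ha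

theorem exists_X_mem_of_monomial_mem {P : Ideal (MvPolynomial σ R)} [P.IsPrime] {b : σ →₀ ℕ}
    (hb : monomial b (1 : R) ∈ P) : ∃ k ∈ b.support, X k ∈ P := by
  rw [monomial_eq, C_1, one_mul, Finsupp.prod, Ideal.IsPrime.prod_mem_iff] at hb
  obtain ⟨k, hk, hkP⟩ := hb
  exact ⟨k, hk, Ideal.IsPrime.mem_of_pow_mem ‹_› _ hkP⟩

theorem X_mem_span_X_image_iff [Nontrivial R] {C : Set σ} {k : σ} :
    (X k : MvPolynomial σ R) ∈ Ideal.span (X '' C) ↔ k ∈ C := by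
  classical
  simp [mem_ideal_span_X_image, support_X, Finsupp.single_apply]

theorem ker_killCompl_subtype_val (C : Set σ) :
    RingHom.ker (killCompl (R := R)
      (Subtype.val_injective : Function.Injective ((↑) : ↥(Cᶜ) → σ))) = Ideal.span (X '' C) := by
  refine le_antisymm (fun p hp => mem_ideal_span_X_image.mpr fun m hm => ?_) ?_
  · by_contra! hmC
    have hsub : (m.support : Set σ) ⊆ Set.range ((↑) : ↥(Cᶜ) → σ) := fun k hk =>
      ⟨⟨k, fun hkC => Finsupp.mem_support_iff.mp hk (hmC k hkC)⟩, rfl⟩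
    have := coeff_killCompl (R := R) Subtype.val_injective (p := p)
      (s := m.comapDomain ((↑) : ↥(Cᶜ) → σ) Subtype.val_injective.injOn)
    rw [Finsupp.mapDomain_comapDomain _ Subtype.val_injective _ hsub, RingHom.mem_ker.mp hp,
      coeff_zero] at this
    exact mem_support_iff.mp hm this.symm
  · rw [Ideal.span_le]
    rintro _ ⟨k, hk, rfl⟩
    simp [killCompl, hk]

end CommSemiring

theorem isPrime_span_X_image [CommRing R] [IsDomain R] (C : Set σ) :
    (Ideal.span (X '' C : Set (MvPolynomial σ R))).IsPrime :=
  ker_killCompl_subtype_val (R := R) C ▸ RingHom.ker_isPrime _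

end MvPolynomial

open MvPolynomial

section MinGens

variable {K σ : Type*} [Field K] {I : Ideal (MvPolynomial σ K)}

theorem exists_mem_minGens_le {m : σ →₀ ℕ}
    (h : monomial m (1 : K) ∈ I) : ∃ b ∈ minGens I, b ≤ m := by
  obtain ⟨b, ⟨hbI, hbm⟩, hmin⟩ := wellFounded_lt.has_min
    {b | monomial b (1 : K) ∈ I ∧ b ≤ m} ⟨m, h, le_rfl⟩
  refine ⟨b, ⟨hbI, fun c hc hcb => ?_⟩, hbm⟩
  by_contra hne
  exact hmin c ⟨hc, hcb.trans hbm⟩ (lt_of_le_of_ne hcb hne)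

theorem monomial_update_notMem_of_mem_minGens [DecidableEq σ] {u : σ →₀ ℕ}
    (hu : u ∈ minGens I) {i : σ} {e : ℕ} (he : e < u i) :
    monomial (u.update i e) (1 : K) ∉ I := by
  intro hmem
  obtain ⟨b, hb, hbm⟩ := exists_mem_minGens_le hmem
  have hmu : u.update i e ≤ u := fun k => by
    rw [Finsupp.update_apply]
    split_ifs with hk
    · exact hk ▸ he.le
    · exact le_rfl
  have hbu : b = u := hu.2 b hb.1 (hbm.trans hmu)
  have := hbm i
  rw [hbu, Finsupp.update_apply, if_pos rfl] at this
  omega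

end MinGens

section SupportTwo

variable {K σ : Type*} [Field K] [DecidableEq σ] {I : Ideal (MvPolynomial σ K)}

theorem isVertexCover_setOf_X_mem {P : Ideal (MvPolynomial σ K)} [P.IsPrime] (hIP : I ≤ P) :
    IsVertexCover (underGraph I) {k | X k ∈ P} := by
  rintro k l ⟨-, b, hb, hbs⟩
  obtain ⟨x, hx, hxP⟩ := exists_X_mem_of_monomial_mem (hIP hb.1)
  rw [hbs, Finset.mem_insert, Finset.mem_singleton] at hx
  rcases hx with rfl | rfl
  exacts [Or.inl hxP, Or.inr hxP]

theorem le_span_X_image_of_isVertexCover (hmon : IsMonomialIdeal I) (h2 : IsSupportTwo I)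
    {D : Set σ} (hD : IsVertexCover (underGraph I) D) : I ≤ Ideal.span (X '' D) := by
  obtain ⟨A, hA⟩ := hmon
  rw [hA, Ideal.span_le]
  rintro _ ⟨c, hc, rfl⟩
  have hcI : monomial c (1 : K) ∈ I := hA ▸ Ideal.subset_span ⟨c, hc, rfl⟩
  obtain ⟨b, hb, hbc⟩ := exists_mem_minGens_le hcI
  obtain ⟨k, l, hkl, hbs⟩ := Finset.card_eq_two.mp (h2 b hb)
  refine monomial_mem_of_le hbc (mem_ideal_span_X_image.mpr fun e he => ?_)
  rw [Finset.mem_singleton.mp (support_monomial_subset he)]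
  have hbk : b k ≠ 0 := Finsupp.mem_support_iff.mp (by simp [hbs])
  have hbl : b l ≠ 0 := Finsupp.mem_support_iff.mp (by simp [hbs])
  rcases hD ⟨hkl, b, hb, hbs⟩ with h | h
  exacts [⟨k, h, hbk⟩, ⟨l, h, hbl⟩]

theorem isMinimalVertexCover_setOf_X_mem (hmon : IsMonomialIdeal I) (h2 : IsSupportTwo I)
    {P : Ideal (MvPolynomial σ K)} (hP : P ∈ I.minimalPrimes) :
    IsMinimalVertexCover (underGraph I) {k | X k ∈ P} := by
  have := hP.1.1
  refine ⟨isVertexCover_setOf_X_mem hP.1.2, fun D hDC hD => subset_antisymm hDC fun k hk => ?_⟩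
  have hspan : Ideal.span (X '' D) ≤ P := Ideal.span_le.mpr <| by
    rintro _ ⟨k, hk, rfl⟩
    exact hDC hk
  exact X_mem_span_X_image_iff.mp
    (hP.2 ⟨isPrime_span_X_image D, le_span_X_image_of_isVertexCover hmon h2 hD⟩ hspan hk)

end SupportTwo

section Symbolic

variable {R : Type*} [CommRing R] {I : Ideal R}

theorem mem_localizedComponent_of_mul_mem {P : Ideal R} (hP : P.IsPrime) {s f : R} (hs : s ∉ P)
    (hsf : s * f ∈ I) : f ∈ localizedComponent I P hP := by
  have hu : IsUnit (algebraMap R (Localization.AtPrime P) s) :=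
    IsLocalization.map_units (M := P.primeCompl) _ ⟨s, hs⟩
  rw [localizedComponent, Ideal.mem_comap, ← Ideal.unit_mul_mem_iff_mem _ hu, ← map_mul]
  exact Ideal.mem_map_of_mem _ hsf

theorem mem_symbolicPower_one_of_exists_mul_mem {f : R}
    (h : ∀ P ∈ I.minimalPrimes, ∃ s ∉ P, s * f ∈ I) : f ∈ symbolicPower I 1 := by
  rw [symbolicPower, Submodule.mem_iInf]
  rintro ⟨P, hP⟩
  obtain ⟨s, hs, hsf⟩ := h P hP
  exact mem_localizedComponent_of_mul_mem _ hs (by rwa [pow_one])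

end Symbolic

section Main

variable {K σ : Type*} [Field K] [DecidableEq σ] {I : Ideal (MvPolynomial σ K)}

theorem symbolicPower_one_ne_self_of_nuExp_lt (hmon : IsMonomialIdeal I) (h2 : IsSupportTwo I)
    {i j : σ} (hedge : (underGraph I).Adj i j)
    (hcov : ∀ C : Set σ, IsMinimalVertexCover (underGraph I) C → i ∉ C ∨ j ∉ C)
    {u : σ →₀ ℕ} (hu : u ∈ minGens I) (hlt : nuExp I i j < u i) :
    symbolicPower I 1 ≠ I := by
  obtain ⟨hij, hne⟩ := hedge
  obtain ⟨a, ha, hai⟩ := Nat.sInf_mem (hne.image fun a => a i)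
  have hai : a i = nuExp I i j := hai
  have hmem : monomial (u.update i (nuExp I i j)) (1 : K) ∈ symbolicPower I 1 := by
    refine mem_symbolicPower_one_of_exists_mul_mem fun P hP => ?_
    have := hP.1.1
    rcases hcov _ (isMinimalVertexCover_setOf_X_mem hmon h2 hP) with hi | hj
    · refine ⟨X i ^ u i, fun h => hi (Ideal.IsPrime.mem_of_pow_mem ‹_› _ h), ?_⟩
      rw [X_pow_eq_monomial, monomial_mul, one_mul]
      refine monomial_mem_of_le (fun k => ?_) hu.1
      by_cases hki : k = i <;> simp [hki]
    · refine ⟨X j ^ a j, fun h => hj (Ideal.IsPrime.mem_of_pow_mem ‹_› _ h), ?_⟩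
      rw [X_pow_eq_monomial, monomial_mul, one_mul]
      refine monomial_mem_of_le (fun k => ?_) ha.1.1
      by_cases hkj : k = j
      · simp [hkj]
      by_cases hki : k = i
      · simp [hki, hai, hij]
      have hak : a k = 0 := Finsupp.notMem_support_iff.mp (by simp [ha.2, hki, hkj])
      simp [hak]
  exact fun heq => monomial_update_notMem_of_mem_minGens hu hlt (heq.le hmem)

end Main

theorem stmt4 {K : Type*} [Field K] {n : ℕ} (I : Ideal (MvPolynomial (Fin n) K))
    (hmon : IsMonomialIdeal I) (h2 : IsSupportTwo I) (i j : Fin n)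
    (hedge : (underGraph I).Adj i j)
    (hcov : ∀ C : Set (Fin n), IsMinimalVertexCover (underGraph I) C →
      Xor' (i ∈ C) (j ∈ C))
    (u : Fin n →₀ ℕ) (hu : u ∈ minGens I)
    (hdiv : nuExp I i j + 1 ≤ u i ∨ nuExp I j i + 1 ≤ u j) :
    symbolicPower I 1 ≠ I := by
  have hcov' (C : Set (Fin n)) (hC : IsMinimalVertexCover (underGraph I) C) : j ∉ C ∨ i ∉ C :=
    (hcov C hC).imp And.right And.right
  rcases hdiv with h | h
  · exact symbolicPower_one_ne_self_of_nuExp_lt hmon h2 hedge (fun C hC => (hcov' C hC).symm) hu h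
  · exact symbolicPower_one_ne_self_of_nuExp_lt hmon h2 hedge.symm hcov' hu h
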